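/- The maximum of the function δ ↦ H₂(δ)/(1+δ) over the interval [0, 1/2] equals log₂((1+√5)/2), the base-2 logarithm of the golden ratio, and it is attained at δ = (3 − √5)/2. -/

import Mathlib

/-!
Gibbs' inequality against the distribution `(φ⁻², φ⁻¹)`, which sums to one because
`φ² = φ + 1`, bounds the binary entropy:
`h(δ) ≤ -δ log φ⁻² - (1 - δ) log φ⁻¹ = (1 + δ) log φ` for every `δ ∈ [0, 1]`,
with equality at `δ = φ⁻² = (3 - √5)/2`.
-/

/-- The binary entropy function (base 2), with `H2 0 = H2 1 = 0`. -/
noncomputable def H2 (x : ℝ) : ℝ := -(x * Real.logb 2 x) - (1 - x) * Real.logb 2 (1 - x)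

open Real goldenRatio

lemma H2_eq_binEntropy_div_log_two (x : ℝ) : H2 x = binEntropy x / log 2 := by
  simp only [H2, binEntropy, logb, log_inv]
  ring

lemma negMulLog_le_sub_sub_mul_log {x a : ℝ} (hx : 0 ≤ x) (ha : 0 < a) :
    negMulLog x ≤ a - x - x * log a := by
  have hsplit := negMulLog_mul a (x / a)
  rw [mul_div_cancel₀ x ha.ne'] at hsplit
  have hlog : x / a * negMulLog a = -(x * log a) := by
    rw [negMulLog]
    field_simp
  have hrel := mul_le_mul_of_nonneg_left (negMulLog_le_one_sub_self (div_nonneg hx ha.le)) ha.le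
  rw [mul_sub, mul_one, mul_div_cancel₀ x ha.ne'] at hrel
  linarith

lemma binEntropy_le_of_add_eq_one {p a b : ℝ} (hp₀ : 0 ≤ p) (hp₁ : p ≤ 1) (ha : 0 < a)
    (hb : 0 < b) (hab : a + b = 1) : binEntropy p ≤ -(p * log a) - (1 - p) * log b := by
  rw [binEntropy_eq_negMulLog_add_negMulLog_one_sub]
  linarith [negMulLog_le_sub_sub_mul_log hp₀ ha,
    negMulLog_le_sub_sub_mul_log (sub_nonneg.2 hp₁) hb]

lemma inv_goldenRatio_sq_add_inv_goldenRatio : φ⁻¹ ^ 2 + φ⁻¹ = 1 := by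
  rw [inv_goldenRatio, neg_sq]
  linarith [goldenConj_sq]

lemma binEntropy_le_mul_log_goldenRatio {p : ℝ} (hp₀ : 0 ≤ p) (hp₁ : p ≤ 1) :
    binEntropy p ≤ (1 + p) * log φ :=
  calc binEntropy p ≤ -(p * log (φ⁻¹ ^ 2)) - (1 - p) * log φ⁻¹ :=
        binEntropy_le_of_add_eq_one hp₀ hp₁ (by positivity) (by positivity)
          inv_goldenRatio_sq_add_inv_goldenRatio
    _ = (1 + p) * log φ := by
        rw [log_pow, log_inv]
        push_cast
        ring

lemma binEntropy_inv_goldenRatio_sq : binEntropy (φ⁻¹ ^ 2) = (1 + φ⁻¹ ^ 2) * log φ := by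
  have hcompl : 1 - φ⁻¹ ^ 2 = φ⁻¹ := by linarith [inv_goldenRatio_sq_add_inv_goldenRatio]
  rw [binEntropy, hcompl]
  simp only [log_inv, log_pow]
  push_cast
  linear_combination (log φ) * inv_goldenRatio_sq_add_inv_goldenRatio

lemma H2_le_mul_logb_goldenRatio {p : ℝ} (hp₀ : 0 ≤ p) (hp₁ : p ≤ 1) :
    H2 p ≤ (1 + p) * logb 2 φ := by
  rw [H2_eq_binEntropy_div_log_two, logb, mul_div_assoc']
  exact div_le_div_of_nonneg_right (binEntropy_le_mul_log_goldenRatio hp₀ hp₁)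
    (log_nonneg one_le_two)

lemma H2_inv_goldenRatio_sq : H2 (φ⁻¹ ^ 2) = (1 + φ⁻¹ ^ 2) * logb 2 φ := by
  rw [H2_eq_binEntropy_div_log_two, logb, mul_div_assoc', binEntropy_inv_goldenRatio_sq]

lemma inv_goldenRatio_sq_eq_three_sub_sqrt_five_div_two : φ⁻¹ ^ 2 = (3 - √5) / 2 := by
  linear_combination inv_goldenRatio_sq_add_inv_goldenRatio - inv_goldenRatio

/-- The maximum of `δ ↦ H₂(δ)/(1+δ)` over `[0,1/2]` equals `log₂((1+√5)/2)` (the base-2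
logarithm of the golden ratio), and it is attained at `δ = (3−√5)/2`. -/
theorem golden_ratio_capacity :
    IsGreatest ((fun δ : ℝ => H2 δ / (1 + δ)) '' Set.Icc 0 (1 / 2))
      (Real.logb 2 ((1 + Real.sqrt 5) / 2)) ∧
    (3 - Real.sqrt 5) / 2 ∈ Set.Icc (0 : ℝ) (1 / 2) ∧
    H2 ((3 - Real.sqrt 5) / 2) / (1 + (3 - Real.sqrt 5) / 2)
      = Real.logb 2 ((1 + Real.sqrt 5) / 2) := by
  rw [← inv_goldenRatio_sq_eq_three_sub_sqrt_five_div_two]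
  have hmem : φ⁻¹ ^ 2 ∈ Set.Icc (0 : ℝ) (1 / 2) := by
    have : 2⁻¹ < φ⁻¹ := inv_strictAnti₀ goldenRatio_pos goldenRatio_lt_two
    constructor <;> nlinarith [inv_goldenRatio_sq_add_inv_goldenRatio]
  have hval : H2 (φ⁻¹ ^ 2) / (1 + φ⁻¹ ^ 2) = logb 2 φ := by
    rw [H2_inv_goldenRatio_sq, mul_div_cancel_left₀ _ (by positivity)]
  refine ⟨⟨⟨_, hmem, hval⟩, ?_⟩, hmem, hval⟩
  rintro _ ⟨δ, ⟨hδ₀, hδ₁⟩, rfl⟩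
  exact (div_le_iff₀' (by positivity)).2 (H2_le_mul_logb_goldenRatio hδ₀ (by linarith))
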